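/- arXiv:math/0110282 — 5 statements merged into one kernel-verified Lean document; each statement's English description precedes it below -/
import Mathlib

section
/- Let p be an odd prime. Then there exist three quadratic forms Q_0, Q_+, Q_- on the group ℤ/p such that every quadratic form Q on ℤ/p is isomorphic to one of Q_0, Q_+, Q_-. Explicitly, one may take Q_0(1) = 0, Q_+(1) = 2/p, and Q_-(1) = 2p_- /p, where p_- is a fixed quadratic non-residue modulo p. -/
/-- The map `ℚ/ℤ → ℚ/2ℤ` induced by multiplication by `2`. -/
def QZtoQ2Z : AddCircle (1 : ℚ) →+ AddCircle (2 : ℚ) :=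
  QuotientAddGroup.map (AddSubgroup.zmultiples (1 : ℚ)) (AddSubgroup.zmultiples (2 : ℚ))
    (AddMonoidHom.mk' (fun q : ℚ => 2 * q) (fun a b => by ring))
    (by
      intro x hx
      obtain ⟨k, hk⟩ := AddSubgroup.mem_zmultiples_iff.mp hx
      rw [AddSubgroup.mem_comap]
      exact AddSubgroup.mem_zmultiples_iff.mpr
        ⟨k, by simp only [AddMonoidHom.mk'_apply, ← hk, zsmul_eq_mul]; ring⟩)

/-- A quadratic form on a finite abelian group `A`: a function `Q : A → ℚ/2ℤ` with
`Q (n • a) = n² • Q a` for which there is a symmetric biadditive `B : A × A → ℚ/ℤ`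
with `Q (a + b) = Q a + Q b + 2·B a b`. -/
def IsQuadraticForm {A : Type} [AddCommGroup A] (Q : A → AddCircle (2 : ℚ)) : Prop :=
  (∀ (n : ℤ) (a : A), Q (n • a) = (n ^ 2) • Q a) ∧
  ∃ B : A → A → AddCircle (1 : ℚ),
    (∀ a b : A, B a b = B b a) ∧
    (∀ a b c : A, B (a + b) c = B a c + B b c) ∧
    (∀ a b : A, Q (a + b) = Q a + Q b + QZtoQ2Z (B a b))

/-!
A quadratic form `Q` on `ℤ/n` is determined by `Q 1`, since `Q x = x² • Q 1`. For odd `n` the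
value `Q 1 ∈ ℚ/2ℤ` is killed by `n²` (as `Q (n • 1) = Q 0 = 0`) and by `2n` (as `2 • Q 1 = 2 B(1,1)`
and `n • B(1,1) = B(0,1) = 0`), hence by `n`; so `Q x = 2 d x² / n` for some `d ∈ ℤ/n`.
Precomposing with multiplication by a unit `u` turns `d` into `d u²`, and over `𝔽_p` every `d`
is `0`, a nonzero square, or a fixed non-square times a nonzero square.
-/

def zmodToAddCircle (n : ℕ) (c : ℚ) : ZMod n →+ AddCircle c :=
  ZMod.lift n ⟨zmultiplesHom _ ((c / n : ℚ) : AddCircle c), by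
    rcases eq_or_ne n 0 with rfl | hn
    · simp
    · rw [zmultiplesHom_apply, ← AddCircle.coe_zsmul, zsmul_eq_mul]
      push_cast
      rw [mul_div_cancel₀ _ (by exact_mod_cast hn), AddCircle.coe_period]⟩

theorem zmodToAddCircle_intCast (n : ℕ) (c : ℚ) (k : ℤ) :
    zmodToAddCircle n c k = ((k * c / n : ℚ) : AddCircle c) := by
  rw [zmodToAddCircle, ZMod.lift_coe, zmultiplesHom_apply, ← AddCircle.coe_zsmul, zsmul_eq_mul,
    mul_div_assoc]

theorem zmodToAddCircle_natCast (n : ℕ) (c : ℚ) (k : ℕ) :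
    zmodToAddCircle n c k = ((k * c / n : ℚ) : AddCircle c) := by
  exact_mod_cast zmodToAddCircle_intCast n c k

theorem QZtoQ2Z_zmodToAddCircle (n : ℕ) (x : ZMod n) :
    QZtoQ2Z (zmodToAddCircle n 1 x) = zmodToAddCircle n 2 x := by
  obtain ⟨k, rfl⟩ := ZMod.intCast_surjective x
  rw [zmodToAddCircle_intCast, zmodToAddCircle_intCast]
  change ((2 * (k * 1 / n) : ℚ) : AddCircle (2 : ℚ)) = _
  congr 1
  ring

theorem exists_zmodToAddCircle_eq {n : ℕ} (hn : n ≠ 0) {c : ℚ} {x : AddCircle c}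
    (hx : n • x = 0) : ∃ k : ZMod n, zmodToAddCircle n c k = x := by
  obtain ⟨q, rfl⟩ := QuotientAddGroup.mk_surjective x
  rw [← AddCircle.coe_nsmul, AddCircle.coe_eq_zero_iff] at hx
  obtain ⟨m, hm⟩ := hx
  refine ⟨m, ?_⟩
  rw [zmodToAddCircle_intCast]
  congr 1
  rw [nsmul_eq_mul, zsmul_eq_mul] at hm
  field_simp
  linear_combination hm

def sqForm (n : ℕ) (d : ZMod n) (x : ZMod n) : AddCircle (2 : ℚ) :=
  zmodToAddCircle n 2 (d * x ^ 2)

theorem isQuadraticForm_sqForm (n : ℕ) (d : ZMod n) : IsQuadraticForm (sqForm n d) := by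
  refine ⟨fun m a => ?_, fun a b => zmodToAddCircle n 1 (2 * d * a * b), fun a b => ?_,
    fun a b c => ?_, fun a b => ?_⟩
  · rw [sqForm, sqForm, ← map_zsmul]
    congr 1
    simp only [zsmul_eq_mul]
    push_cast
    ring
  · exact congrArg _ (by ring)
  · dsimp only
    rw [← map_add]
    congr 1; ring
  · rw [QZtoQ2Z_zmodToAddCircle, sqForm, sqForm, sqForm, ← map_add, ← map_add]
    congr 1; ring

theorem sqForm_mul_sq (n : ℕ) (d u x : ZMod n) : sqForm n (d * u ^ 2) x = sqForm n d (u * x) := by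
  rw [sqForm, sqForm]; congr 1; ring

namespace IsQuadraticForm

variable {n : ℕ} {Q : ZMod n → AddCircle (2 : ℚ)}

theorem apply_eq_sq_zsmul (hQ : IsQuadraticForm Q) (x : ZMod n) :
    Q x = (x.cast : ℤ) ^ 2 • Q 1 := by
  rw [← hQ.1, zsmul_one, ZMod.intCast_zmod_cast]

theorem nsmul_apply_one_eq_zero (hQ : IsQuadraticForm Q) (hn : Odd n) : n • Q 1 = 0 := by
  obtain ⟨hsmul, B, -, hadd, hpolar⟩ := hQ
  have hB : (n : ℤ) • B 1 1 = 0 := by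
    let f : ZMod n →+ AddCircle (1 : ℚ) := AddMonoidHom.mk' (B · 1) (hadd · · 1)
    have h := f.map_zsmul (n : ℤ) 1
    rw [zsmul_one, Int.cast_natCast, ZMod.natCast_self, map_zero] at h
    exact h.symm
  have h2 : (2 : ℤ) • Q 1 = QZtoQ2Z (B 1 1) := by
    have h := hsmul 2 1
    rw [two_zsmul, hpolar, sq, mul_zsmul, two_zsmul (2 • Q 1), ← two_zsmul (Q 1)] at h
    exact (add_left_cancel h).symm
  have h2n : (2 * n : ℤ) • Q 1 = 0 := by
    rw [mul_comm, mul_zsmul, h2, ← map_zsmul, hB, map_zero]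
  have hnn : ((n : ℤ) ^ 2) • Q 1 = 0 := by
    rw [← hsmul, zsmul_one, Int.cast_natCast, ZMod.natCast_self]
    simpa using hsmul 0 0
  obtain ⟨r, hr⟩ := hn
  -- `n` is a combination of `n ^ 2` and `2 * n`, as `n` is odd
  have hn_eq : (n : ℤ) = n ^ 2 - r * (2 * n) := by rw [hr]; push_cast; ring
  rw [← natCast_zsmul, hn_eq, sub_zsmul, mul_zsmul, h2n, hnn]
  simp

theorem exists_eq_sqForm (hQ : IsQuadraticForm Q) (hn : Odd n) : ∃ d, Q = sqForm n d := by
  obtain ⟨d, hd⟩ := exists_zmodToAddCircle_eq hn.pos.ne' (hQ.nsmul_apply_one_eq_zero hn)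
  refine ⟨d, funext fun x => ?_⟩
  rw [hQ.apply_eq_sq_zsmul, ← hd, ← map_zsmul, sqForm, zsmul_eq_mul]
  push_cast [ZMod.intCast_zmod_cast]
  ring_nf

end IsQuadraticForm

theorem eq_zero_or_exists_eq_sq_or_eq_mul_sq {F : Type*} [Field F] [Fintype F] [DecidableEq F]
    {a : F} (ha : ¬IsSquare a) (d : F) :
    d = 0 ∨ ∃ u : F, u ≠ 0 ∧ (d = u ^ 2 ∨ d = a * u ^ 2) := by
  rcases eq_or_ne d 0 with hd | hd
  · exact .inl hd
  right
  by_cases hsq : IsSquare d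
  · obtain ⟨u, rfl⟩ := hsq
    exact ⟨u, by rintro rfl; simp at hd, .inl (sq u).symm⟩
  have ha0 : a ≠ 0 := by rintro rfl; exact ha .zero
  obtain ⟨v, hv⟩ : IsSquare (d * a) := by
    rw [← quadraticChar_one_iff_isSquare (mul_ne_zero hd ha0), map_mul,
      quadraticChar_neg_one_iff_not_isSquare.mpr hsq, quadraticChar_neg_one_iff_not_isSquare.mpr ha]
    norm_num
  have hv0 : v ≠ 0 := by rintro rfl; simp [hd, ha0] at hv
  refine ⟨v * a⁻¹, mul_ne_zero hv0 (inv_ne_zero ha0), .inr ?_⟩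
  field_simp
  linear_combination hv

/-- Let `p` be an odd prime.  There are three quadratic forms `Q₀`, `Q₊`, `Q₋` on
`ℤ/p`, with `Q₀ 1 = 0`, `Q₊ 1 = 2/p`, `Q₋ 1 = 2p₋/p` for a quadratic non-residue
`p₋` mod `p`, such that every quadratic form on `ℤ/p` is isomorphic to one of them. -/
theorem stmt_8 (p : ℕ) (hp : p.Prime) (hodd : Odd p) :
    ∃ (pm : ℕ) (Q0 Qp Qm : ZMod p → AddCircle (2 : ℚ)),
      ¬ IsSquare (pm : ZMod p) ∧
      IsQuadraticForm Q0 ∧ IsQuadraticForm Qp ∧ IsQuadraticForm Qm ∧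
      Q0 1 = 0 ∧
      Qp 1 = ((2 / p : ℚ) : AddCircle (2 : ℚ)) ∧
      Qm 1 = ((2 * pm / p : ℚ) : AddCircle (2 : ℚ)) ∧
      ∀ Q : ZMod p → AddCircle (2 : ℚ), IsQuadraticForm Q →
        ∃ φ : ZMod p ≃+ ZMod p,
          (∀ a, Q a = Q0 (φ a)) ∨ (∀ a, Q a = Qp (φ a)) ∨ (∀ a, Q a = Qm (φ a)) := by
  have := Fact.mk hp
  obtain ⟨a, ha⟩ := FiniteField.exists_nonsquare (F := ZMod p) <| by
    rw [ZMod.ringChar_zmod_n]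
    rintro rfl
    exact Nat.not_odd_iff_even.mpr even_two hodd
  refine ⟨a.val, sqForm p 0, sqForm p 1, sqForm p a, by rwa [ZMod.natCast_zmod_val],
    isQuadraticForm_sqForm p 0, isQuadraticForm_sqForm p 1, isQuadraticForm_sqForm p a,
    by simp [sqForm], ?_, ?_, fun Q hQ => ?_⟩
  · simpa [sqForm] using zmodToAddCircle_natCast p 2 1
  · have h := zmodToAddCircle_natCast p 2 a.val
    rw [ZMod.natCast_zmod_val] at h
    rw [sqForm, one_pow, mul_one, h, mul_comm]
  obtain ⟨d, rfl⟩ := hQ.exists_eq_sqForm hodd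
  rcases eq_zero_or_exists_eq_sq_or_eq_mul_sq ha d with rfl | ⟨u, hu, rfl | rfl⟩
  · exact ⟨AddEquiv.refl _, .inl fun _ => rfl⟩
  · exact ⟨DistribMulAction.toAddEquiv₀ _ u hu, .inr <| .inl fun x => by
      rw [← one_mul (u ^ 2)]; exact sqForm_mul_sq p 1 u x⟩
  · exact ⟨DistribMulAction.toAddEquiv₀ _ u hu, .inr <| .inr fun x => sqForm_mul_sq p a u x⟩
end

section
/- Let p and q be distinct odd primes and let A be a finite abelian group of order pq. Then there exist at most nine isomorphism classes of quadratic forms on A: there are quadratic forms Q_1, …, Q_9 on A such that every quadratic form on A is isomorphic to some Q_i. -/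
/-!
A group of order `pq` is cyclic, so it suffices to classify quadratic forms on `ZMod n` with `n`
odd. For such a form `Q`, `Q 1` is killed by `n²` (homogeneity) and by `2n` (since
`2 Q 1 = 2 B(1,1)`), hence by `n`; so `Q x = 2cx²/n` for some `c : ZMod n`. Rescaling `x` by a
unit `u` replaces `c` by `u²c`, and by the Chinese remainder theorem `ZMod (pq)` has at most
`3 · 3` classes modulo unit squares, `0`, `1` and a non-square in each of `𝔽_p` and `𝔽_q`.
-/

namespace ZMod

def toRatAddCircle (n : ℕ) [NeZero n] (T : ℚ) : ZMod n →+ AddCircle T :=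
  lift n (A := AddCircle T) ⟨zmultiplesHom (AddCircle T) ((T / n : ℚ) : AddCircle T), by
    rw [zmultiplesHom_apply, natCast_zsmul, ← AddCircle.coe_nsmul, nsmul_eq_mul,
      mul_div_cancel₀ _ (NeZero.ne (n : ℚ))]
    exact AddCircle.coe_period T⟩

variable {n : ℕ} [NeZero n]

lemma toRatAddCircle_intCast (T : ℚ) (a : ℤ) :
    toRatAddCircle n T a = a • ((T / n : ℚ) : AddCircle T) :=
  lift_coe _ _ a

lemma QZtoQ2Z_toRatAddCircle (x : ZMod n) :
    QZtoQ2Z (toRatAddCircle n 1 x) = toRatAddCircle n 2 x := by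
  obtain ⟨a, rfl⟩ := intCast_surjective x
  rw [toRatAddCircle_intCast, toRatAddCircle_intCast, map_zsmul]
  congr 2
  exact congrArg _ (mul_one_div 2 (n : ℚ))

def quadForm (n : ℕ) [NeZero n] (c x : ZMod n) : AddCircle (2 : ℚ) :=
  toRatAddCircle n 2 (c * x ^ 2)

lemma isQuadraticForm_quadForm (c : ZMod n) : IsQuadraticForm (quadForm n c) := by
  refine ⟨fun m x => ?_, fun x y => toRatAddCircle n 1 (2 * c * x * y),
    fun x y => by ring_nf, fun x y z => by rw [← map_add]; ring_nf, fun x y => ?_⟩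
  · rw [quadForm, quadForm, ← map_zsmul, zsmul_eq_mul, zsmul_eq_mul]
    push_cast
    ring_nf
  · rw [quadForm, quadForm, quadForm, QZtoQ2Z_toRatAddCircle, ← map_add, ← map_add]
    ring_nf

lemma quadForm_mul_left (c u x : ZMod n) : quadForm n c (u * x) = quadForm n (u ^ 2 * c) x := by
  rw [quadForm, quadForm]
  ring_nf

end ZMod

lemma AddCircle.exists_toRatAddCircle_eq_of_nsmul_eq_zero {T : ℚ} {n : ℕ} [NeZero n]
    {t : AddCircle T} (h : n • t = 0) : ∃ c : ZMod n, ZMod.toRatAddCircle n T c = t := by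
  obtain ⟨s, rfl⟩ := QuotientAddGroup.mk_surjective t
  rw [← AddCircle.coe_nsmul, AddCircle.coe_eq_zero_iff] at h
  obtain ⟨k, hk⟩ := h
  refine ⟨k, ?_⟩
  rw [ZMod.toRatAddCircle_intCast, ← AddCircle.coe_zsmul]
  congr 1
  rw [zsmul_eq_mul, nsmul_eq_mul] at *
  rw [← mul_div_assoc, hk, mul_div_cancel_left₀ _ (NeZero.ne (n : ℚ))]

namespace IsQuadraticForm

variable {A : Type} [AddCommGroup A] {Q : A → AddCircle (2 : ℚ)}

lemma map_zero (hQ : IsQuadraticForm Q) : Q 0 = 0 := by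
  simpa using hQ.1 0 0

lemma comp_addMonoidHom {A' : Type} [AddCommGroup A'] (hQ : IsQuadraticForm Q) (f : A' →+ A) :
    IsQuadraticForm (Q ∘ f) := by
  obtain ⟨hhom, B, hsymm, hadd, hpolar⟩ := hQ
  refine ⟨fun m a => ?_, fun a b => B (f a) (f b), fun a b => hsymm _ _,
    fun a b c => ?_, fun a b => ?_⟩ <;>
  simp only [Function.comp_apply, map_zsmul, map_add, hhom, hadd, hpolar]

lemma nsmul_map_eq_zero_of_odd (hQ : IsQuadraticForm Q) {n : ℕ} (hn : Odd n) {a : A}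
    (ha : n • a = 0) : n • Q a = 0 := by
  have hsq : ((n : ℤ) ^ 2) • Q a = 0 := by
    rw [← hQ.1, natCast_zsmul, ha, hQ.map_zero]
  obtain ⟨hhom, B, -, hadd, hpolar⟩ := hQ
  have htwo : (2 : ℤ) • Q a = QZtoQ2Z (B a a) := by
    have h := hhom 2 a
    rw [two_zsmul, hpolar, show (2 : ℤ) ^ 2 = 2 + 2 by norm_num, add_smul, two_zsmul] at h
    rw [two_zsmul]
    exact (add_left_cancel h).symm
  have hB : n • B a a = 0 := by
    let Ba : A →+ AddCircle (1 : ℚ) := AddMonoidHom.mk' (B · a) (hadd · · a)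
    change n • Ba a = 0
    rw [← map_nsmul, ha, _root_.map_zero]
  obtain ⟨k, rfl⟩ := hn
  rw [← natCast_zsmul]
  calc ((2 * k + 1 : ℕ) : ℤ) • Q a
      = ((2 * k + 1 : ℕ) : ℤ) ^ 2 • Q a - ((k : ℤ) * (2 * k + 1 : ℕ)) • (2 : ℤ) • Q a := by
        rw [smul_smul, ← sub_smul]
        congr 1
        push_cast
        ring
    _ = 0 := by
        rw [hsq, htwo, mul_smul, natCast_zsmul _ (2 * k + 1), ← map_nsmul, hB, _root_.map_zero,
          smul_zero, sub_zero]

end IsQuadraticForm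

lemma IsQuadraticForm.exists_eq_quadForm {n : ℕ} [NeZero n] (hn : Odd n)
    {Q : ZMod n → AddCircle (2 : ℚ)} (hQ : IsQuadraticForm Q) :
    ∃ c, Q = ZMod.quadForm n c := by
  obtain ⟨c, hc⟩ := AddCircle.exists_toRatAddCircle_eq_of_nsmul_eq_zero
    (hQ.nsmul_map_eq_zero_of_odd hn (by simp : n • (1 : ZMod n) = 0))
  refine ⟨c, funext fun x => ?_⟩
  obtain ⟨m, rfl⟩ := ZMod.intCast_surjective x
  rw [← zsmul_one, hQ.1, ← hc, ← map_zsmul, ZMod.quadForm]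
  congr 1
  simp only [zsmul_eq_mul, mul_one]
  push_cast
  ring

def CoversSquareClasses {R ι : Type*} [Monoid R] (rep : ι → R) : Prop :=
  ∀ a : R, ∃ (u : Rˣ) (i : ι), a = u ^ 2 * rep i

namespace CoversSquareClasses

variable {R S ι κ : Type*} [Monoid R] [Monoid S] {r : ι → R}

lemma comp_surjective (hr : CoversSquareClasses r) {σ : κ → ι} (hσ : σ.Surjective) :
    CoversSquareClasses (r ∘ σ) := by
  intro a
  obtain ⟨u, i, rfl⟩ := hr a
  obtain ⟨j, rfl⟩ := hσ i
  exact ⟨u, j, rfl⟩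

lemma map (hr : CoversSquareClasses r) {f : R →* S} (hf : Function.Surjective f) :
    CoversSquareClasses (f ∘ r) := by
  intro a
  obtain ⟨b, rfl⟩ := hf a
  obtain ⟨u, i, rfl⟩ := hr b
  exact ⟨Units.map f u, i, by simp⟩

lemma prodMk (hr : CoversSquareClasses r) {s : κ → S} (hs : CoversSquareClasses s) :
    CoversSquareClasses (fun ij : ι × κ => (r ij.1, s ij.2)) := by
  rintro ⟨a, b⟩
  obtain ⟨u, i, rfl⟩ := hr a
  obtain ⟨v, j, rfl⟩ := hs b
  exact ⟨MulEquiv.prodUnits.symm (u, v), (i, j), rfl⟩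

end CoversSquareClasses

lemma FiniteField.isSquare_mul_of_not_isSquare {F : Type*} [Field F] [Fintype F] {a b : F}
    (ha : ¬IsSquare a) (hb : ¬IsSquare b) : IsSquare (a * b) := by
  classical
  have ha0 : a ≠ 0 := by rintro rfl; exact ha IsSquare.zero
  have hb0 : b ≠ 0 := by rintro rfl; exact hb IsSquare.zero
  rw [← quadraticChar_neg_one_iff_not_isSquare] at ha hb
  rw [← quadraticChar_one_iff_isSquare (mul_ne_zero ha0 hb0), map_mul, ha, hb, neg_one_mul,
    neg_neg]

lemma FiniteField.exists_coversSquareClasses_fin_three {F : Type*} [Field F] [Fintype F]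
    (hF : ringChar F ≠ 2) : ∃ rep : Fin 3 → F, CoversSquareClasses rep := by
  obtain ⟨ν, hν⟩ := exists_nonsquare hF
  have hν0 : ν ≠ 0 := by rintro rfl; exact hν IsSquare.zero
  refine ⟨![0, 1, ν], fun a => ?_⟩
  by_cases ha : IsSquare a
  · obtain ⟨r, rfl⟩ := ha
    by_cases hr : r = 0
    · exact ⟨1, 0, by simp [hr]⟩
    · exact ⟨Units.mk0 r hr, 1, by simp [sq]⟩
  · obtain ⟨r, hr⟩ := isSquare_mul_of_not_isSquare ha hν
    have ha0 : a ≠ 0 := by rintro rfl; exact ha IsSquare.zero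
    have hr0 : r ≠ 0 := by
      rintro rfl
      exact mul_ne_zero ha0 hν0 (by simpa using hr)
    refine ⟨Units.mk0 (r / ν) (div_ne_zero hr0 hν0), 2, ?_⟩
    simp only [Units.val_mk0, Matrix.cons_val]
    field_simp
    rw [hr, sq]

lemma ZMod.exists_coversSquareClasses_fin_nine {p q : ℕ} [Fact p.Prime] [Fact q.Prime]
    (hp : p ≠ 2) (hq : q ≠ 2) (hpq : p.Coprime q) :
    ∃ rep : Fin 9 → ZMod (p * q), CoversSquareClasses rep := by
  obtain ⟨r, hr⟩ := FiniteField.exists_coversSquareClasses_fin_three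
    (by rwa [ringChar_zmod_n] : ringChar (ZMod p) ≠ 2)
  obtain ⟨s, hs⟩ := FiniteField.exists_coversSquareClasses_fin_three
    (by rwa [ringChar_zmod_n] : ringChar (ZMod q) ≠ 2)
  let crt := (chineseRemainder hpq).symm
  exact ⟨_, ((hr.prodMk hs).map (f := crt.toMonoidHom) crt.surjective).comp_surjective
    finProdFinEquiv.symm.surjective⟩

lemma IsQuadraticForm.exists_eq_quadForm_comp {A : Type} [AddCommGroup A] {n : ℕ} [NeZero n]
    (hn : Odd n) (e : A ≃+ ZMod n) {ι : Type*} {rep : ι → ZMod n}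
    (hrep : CoversSquareClasses rep) {Q : A → AddCircle (2 : ℚ)} (hQ : IsQuadraticForm Q) :
    ∃ (i : ι) (φ : A ≃+ A), ∀ a, Q a = ZMod.quadForm n (rep i) (e (φ a)) := by
  obtain ⟨c, hc⟩ := (hQ.comp_addMonoidHom e.symm.toAddMonoidHom).exists_eq_quadForm hn
  obtain ⟨u, i, rfl⟩ := hrep c
  refine ⟨i, (e.trans (DistribMulAction.toAddEquiv (ZMod n) u)).trans e.symm, fun a => ?_⟩
  simp only [AddEquiv.trans_apply, AddEquiv.apply_symm_apply, DistribMulAction.toAddEquiv_apply,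
    Units.smul_def, smul_eq_mul, ZMod.quadForm_mul_left, ← hc]
  exact congrArg Q (e.symm_apply_apply a).symm

lemma nonempty_addEquiv_zmod_of_card_eq_mul {A : Type} [AddCommGroup A] [Finite A] {p q : ℕ}
    [Fact p.Prime] [Fact q.Prime] (hpq : p.Coprime q) (hA : Nat.card A = p * q) :
    Nonempty (A ≃+ ZMod (p * q)) := by
  obtain ⟨a, ha⟩ := exists_prime_addOrderOf_dvd_card' (G := A) p (hA ▸ dvd_mul_right p q)
  obtain ⟨b, hb⟩ := exists_prime_addOrderOf_dvd_card' (G := A) q (hA ▸ dvd_mul_left q p)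
  have hab : addOrderOf (a + b) = Nat.card A := by
    rw [(AddCommute.all a b).addOrderOf_add_eq_mul_addOrderOf_of_coprime (ha ▸ hb ▸ hpq), ha, hb,
      hA]
  obtain ⟨g, hg⟩ := (isAddCyclic_of_addOrderOf_eq_card (a + b) hab).exists_generator
  exact ⟨(zmodAddEquivOfGenerator hg hA).symm⟩

/-- Let `p ≠ q` be distinct odd primes and `A` a finite abelian group of order `pq`.
Then there are at most nine isomorphism classes of quadratic forms on `A`: there are
quadratic forms `Q₁, …, Q₉` on `A` such that every quadratic form on `A` is
isomorphic to some `Qᵢ`. -/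
theorem stmt_9 (p q : ℕ) (hp : p.Prime) (hq : q.Prime) (hop : Odd p) (hoq : Odd q)
    (hpq : p ≠ q) (A : Type) [AddCommGroup A] [Fintype A] (hA : Fintype.card A = p * q) :
    ∃ Qs : Fin 9 → A → AddCircle (2 : ℚ),
      (∀ i, IsQuadraticForm (Qs i)) ∧
      ∀ Q : A → AddCircle (2 : ℚ), IsQuadraticForm Q →
        ∃ (i : Fin 9) (φ : A ≃+ A), ∀ a, Q a = Qs i (φ a) := by
  have := Fact.mk hp
  have := Fact.mk hq
  have : NeZero (p * q) := ⟨(Nat.mul_pos hp.pos hq.pos).ne'⟩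
  have hcop : p.Coprime q := (Nat.coprime_primes hp hq).mpr hpq
  obtain ⟨e⟩ := nonempty_addEquiv_zmod_of_card_eq_mul (A := A) hcop
    (by rw [Nat.card_eq_fintype_card, hA])
  obtain ⟨rep, hrep⟩ := ZMod.exists_coversSquareClasses_fin_nine
    (hop.ne_two_of_dvd_nat dvd_rfl) (hoq.ne_two_of_dvd_nat dvd_rfl) hcop
  exact ⟨fun i => ZMod.quadForm (p * q) (rep i) ∘ e,
    fun i => (ZMod.isQuadraticForm_quadForm _).comp_addMonoidHom e.toAddMonoidHom,
    fun Q hQ => hQ.exists_eq_quadForm_comp (hop.mul hoq) e hrep⟩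
end

section
/- Let G be a group acting on a set X, let H be a subgroup of G of index 2, and let N be a positive natural number. Suppose x_1, …, x_{2N} ∈ X lie in pairwise distinct H-orbits. Then there is a subset of N of these elements lying in pairwise distinct G-orbits. -/
/-- Let `G` act on `X`, let `H ≤ G` have index `2`, and let `N > 0`.  If
`x₁, …, x_{2N} ∈ X` lie in pairwise distinct `H`-orbits, then `N` of them lie in
pairwise distinct `G`-orbits. -/
theorem stmt_10 (G : Type) [Group G] (X : Type) [MulAction G X]
    (H : Subgroup G) (hH : H.index = 2)
    (N : ℕ) (hN : 0 < N) (x : Fin (2 * N) → X)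
    (hx : ∀ i j : Fin (2 * N), i ≠ j → ¬∃ h : G, h ∈ H ∧ h • x i = x j) :
    ∃ f : Fin N → Fin (2 * N), Function.Injective f ∧
      ∀ i j : Fin N, i ≠ j → ¬∃ g : G, g • x (f i) = x (f j) := by
  classical
  set Q := Quotient (MulAction.orbitRel G X) with hQ
  set q : Fin (2 * N) → Q := fun i => Quotient.mk _ (x i) with hq
  have hqiff : ∀ i j, q i = q j ↔ ∃ g : G, g • x j = x i := by
    intro i j
    simp only [hq]
    rw [Quotient.eq, MulAction.orbitRel_apply]
    exact MulAction.mem_orbit_iff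
  -- each fiber of q has at most 2 elements
  have hfiber : ∀ a ∈ Finset.univ.image q,
      ((Finset.univ : Finset (Fin (2 * N))).filter (fun i => q i = a)).card ≤ 2 := by
    intro a _
    by_contra hlt
    push_neg at hlt
    obtain ⟨i, hi, j, hj, k, hk, hij, hik, hjk⟩ := Finset.two_lt_card.1 hlt
    simp only [Finset.mem_filter] at hi hj hk
    obtain ⟨g1, hg1⟩ := (hqiff j i).1 (hj.2.trans hi.2.symm)
    obtain ⟨g2, hg2⟩ := (hqiff k i).1 (hk.2.trans hi.2.symm)
    have h1 : g1 ∉ H := fun h => hx i j hij ⟨g1, h, hg1⟩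
    have h2 : g2 ∉ H := fun h => hx i k hik ⟨g2, h, hg2⟩
    refine hx j k hjk ⟨g2 * g1⁻¹, ?_, ?_⟩
    · rw [Subgroup.mul_mem_iff_of_index_two hH]
      simp [h1, h2]
    · rw [mul_smul, ← hg1, inv_smul_smul, hg2]
  have hcard : N ≤ (Finset.univ.image q).card := by
    have := Finset.card_le_mul_card_image (f := q) Finset.univ 2 hfiber
    simp only [Finset.card_univ, Fintype.card_fin] at this
    omega
  obtain ⟨t, hts, htc⟩ := Finset.exists_subset_card_eq hcard
  set e := (t.equivFinOfCardEq htc).symm with he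
  -- pick preimages
  have hpre : ∀ k : Fin N, ∃ i : Fin (2 * N), q i = (e k : Q) := by
    intro k
    have := hts (e k).2
    obtain ⟨i, _, hi⟩ := Finset.mem_image.1 this
    exact ⟨i, hi⟩
  choose f hf using hpre
  refine ⟨f, ?_, ?_⟩
  · intro a b hab
    have : (e a : Q) = (e b : Q) := by rw [← hf a, ← hf b, hab]
    exact e.injective (Subtype.ext this)
  · intro a b hab ⟨g, hg⟩
    have : (e a : Q) = (e b : Q) := by
      rw [← hf a, ← hf b]
      exact ((hqiff (f b) (f a)).2 ⟨g, hg⟩).symm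
    exact hab (e.injective (Subtype.ext this))
end

section
/- Let V be a finite-dimensional real vector space and B a nondegenerate symmetric bilinear form on V which is positive definite on some 2-dimensional subspace of V. Let C be a countable subset of V. Then there exists a 2-dimensional subspace P of V such that B restricted to P is positive definite and such that no nonzero element of C is B-orthogonal to all of P; that is, for every t ∈ C with t ≠ 0 there exists x ∈ P with B(x, t) ≠ 0. -/
/-!
A pair `u, v` spans a plane on which `B` is positive definite exactly when its Gram
determinant conditions `0 < B u u` and `B u v ^ 2 < B u u * B v v` hold. Fixing `v = b` from such
a pair `a, b` inside the given plane, these conditions define an open neighbourhood of `a`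
(after identifying `V` with `ℝⁿ`). For each nonzero `t ∈ C` the vectors `u` with `B u t = 0`
form a proper subspace by nondegeneracy, which has Lebesgue measure zero; as `C` is countable,
some `u` near `a` avoids all of them, and `span {u, b}` is the required plane.
-/

open MeasureTheory Module

section Gram

variable {V : Type*} [AddCommGroup V] [Module ℝ V] (B : V →ₗ[ℝ] V →ₗ[ℝ] ℝ)

lemma apply_smul_add_smul_self (hsymm : ∀ x y : V, B x y = B y x) (u v : V) (s t : ℝ) :
    B (s • u + t • v) (s • u + t • v) =
      s ^ 2 * B u u + 2 * s * t * B u v + t ^ 2 * B v v := by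
  simp only [map_add, map_smul, LinearMap.add_apply, LinearMap.smul_apply, smul_eq_mul]
  rw [hsymm v u]
  ring

lemma pos_smul_add_smul_iff (hsymm : ∀ x y : V, B x y = B y x) (u v : V) :
    (∀ s t : ℝ, (s ≠ 0 ∨ t ≠ 0) → 0 < B (s • u + t • v) (s • u + t • v)) ↔
      0 < B u u ∧ B u v ^ 2 < B u u * B v v := by
  simp only [apply_smul_add_smul_self B hsymm]
  constructor
  · intro h
    have hu : 0 < B u u := by simpa using h 1 0 (by simp)
    -- the combination `-(B u v) • u + (B u u) • v` is `B`-orthogonal to `u`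
    have hw := h (-B u v) (B u u) (Or.inr hu.ne')
    refine ⟨hu, ?_⟩
    nlinarith
  · rintro ⟨hu, huv⟩ s t hst
    rcases eq_or_ne t 0 with rfl | ht
    · have hs : s ≠ 0 := by simpa using hst
      have : 0 < s ^ 2 := by positivity
      nlinarith
    · have : 0 < t ^ 2 := by positivity
      nlinarith [sq_nonneg (s * B u u + t * B u v)]

lemma finrank_span_pair_eq_two_and_pos_of_gram (hsymm : ∀ x y : V, B x y = B y x) {u v : V}
    (hu : 0 < B u u) (huv : B u v ^ 2 < B u u * B v v) :
    finrank ℝ (Submodule.span ℝ {u, v}) = 2 ∧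
      ∀ x ∈ Submodule.span ℝ {u, v}, x ≠ 0 → 0 < B x x := by
  have hpos := (pos_smul_add_smul_iff B hsymm u v).2 ⟨hu, huv⟩
  have hli : LinearIndependent ℝ ![u, v] := by
    refine LinearIndependent.pair_iff.2 fun s t hst => ?_
    by_contra h
    simpa [hst] using hpos s t (by tauto)
  constructor
  · have hrange : Set.range ![u, v] = {u, v} := by
      simp [Matrix.range_cons, Matrix.range_empty, Set.pair_comm]
    rw [← hrange]
    exact (finrank_span_eq_card hli).trans (Fintype.card_fin 2)
  · intro x hx hx0
    obtain ⟨s, t, rfl⟩ := Submodule.mem_span_pair.1 hx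
    refine hpos s t ?_
    by_contra! h
    simp [h.1, h.2] at hx0

lemma exists_gram_of_finrank_eq_two (hsymm : ∀ x y : V, B x y = B y x) {W : Submodule ℝ V}
    (hW : finrank ℝ W = 2) (hWpos : ∀ x ∈ W, x ≠ 0 → 0 < B x x) :
    ∃ a b : V, 0 < B a a ∧ B a b ^ 2 < B a a * B b b := by
  have : Module.Finite ℝ W := Module.finite_of_finrank_eq_succ hW
  let bW : Basis (Fin 2) ℝ W := finBasisOfFinrankEq ℝ W hW
  have hli : LinearIndependent ℝ ![(bW 0 : V), bW 1] := by
    have h := bW.linearIndependent.map' W.subtype W.ker_subtype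
    rwa [show W.subtype ∘ bW = ![(bW 0 : V), bW 1] by ext i; fin_cases i <;> rfl] at h
  refine ⟨bW 0, bW 1, (pos_smul_add_smul_iff B hsymm _ _).1 fun s t hst => ?_⟩
  refine hWpos _ (W.add_mem (W.smul_mem s (bW 0).2) (W.smul_mem t (bW 1).2)) fun h => ?_
  have := LinearIndependent.pair_iff.1 hli s t h
  tauto

end Gram

theorem IsOpen.exists_forall_notMem_submodule {E : Type*} [NormedAddCommGroup E]
    [NormedSpace ℝ E] [FiniteDimensional ℝ E] {U : Set E} (hU : IsOpen U) (hne : U.Nonempty)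
    {ι : Type*} [Countable ι] {S : ι → Submodule ℝ E} (hS : ∀ i, S i ≠ ⊤) :
    ∃ x ∈ U, ∀ i, x ∉ S i := by
  borelize E
  let μ : Measure E := Measure.addHaar
  have hnull : μ (⋃ i, (S i : Set E)) = 0 :=
    measure_iUnion_null fun i => Measure.addHaar_submodule μ (S i) (hS i)
  have hnot : ¬U ⊆ ⋃ i, (S i : Set E) := fun h =>
    (hU.measure_pos μ hne).ne' (measure_mono_null h hnull)
  obtain ⟨x, hxU, hx⟩ := Set.not_subset.1 hnot
  exact ⟨x, hxU, fun i hi => hx (Set.mem_iUnion_of_mem i hi)⟩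

theorem exists_gram_forall_notMem_submodule {V : Type*} [AddCommGroup V] [Module ℝ V]
    [FiniteDimensional ℝ V] (B : V →ₗ[ℝ] V →ₗ[ℝ] ℝ) {a b : V} (ha : 0 < B a a)
    (hab : B a b ^ 2 < B a a * B b b) {ι : Type*} [Countable ι] {S : ι → Submodule ℝ V}
    (hS : ∀ i, S i ≠ ⊤) :
    ∃ u : V, 0 < B u u ∧ B u b ^ 2 < B u u * B b b ∧ ∀ i, u ∉ S i := by
  let e : V ≃ₗ[ℝ] (Fin (finrank ℝ V) → ℝ) := (finBasis ℝ V).equivFun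
  let Be := (B.compl₁₂ e.symm.toLinearMap e.symm.toLinearMap).toContinuousBilinearMap
  let U : Set (Fin (finrank ℝ V) → ℝ) :=
    {x | 0 < Be x x ∧ Be x (e b) ^ 2 < Be x x * Be (e b) (e b)}
  have hU : IsOpen U := by
    refine (isOpen_lt (g := fun x => Be x x) ?_ ?_).inter
      (isOpen_lt (f := fun x => Be x (e b) ^ 2) ?_ ?_) <;> fun_prop
  have haU : e a ∈ U := by simpa [U, Be] using ⟨ha, hab⟩
  obtain ⟨x, hxU, hx⟩ := hU.exists_forall_notMem_submodule ⟨_, haU⟩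
    (S := fun i => (S i).map e.toLinearMap) fun i => by simpa using hS i
  obtain ⟨hxx, hxb⟩ : 0 < B (e.symm x) (e.symm x) ∧
      B (e.symm x) b ^ 2 < B (e.symm x) (e.symm x) * B b b := by simpa [U, Be] using hxU
  exact ⟨e.symm x, hxx, hxb, fun i hi => hx i ((Submodule.mem_map_equiv _).2 hi)⟩

/-- Let `V` be a finite-dimensional real vector space and `B` a nondegenerate
symmetric bilinear form on `V` which is positive definite on some `2`-dimensional
subspace.  For any countable subset `C ⊆ V` there is a `2`-dimensional subspace `P`
on which `B` is positive definite and such that no nonzero element of `C` is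
`B`-orthogonal to all of `P`. -/
theorem stmt_12 (V : Type) [AddCommGroup V] [Module ℝ V] [FiniteDimensional ℝ V]
    (B : V →ₗ[ℝ] V →ₗ[ℝ] ℝ)
    (hsymm : ∀ x y : V, B x y = B y x)
    (hnd : ∀ x : V, (∀ y : V, B x y = 0) → x = 0)
    (hpos : ∃ W : Submodule ℝ V, Module.finrank ℝ W = 2 ∧
      ∀ x ∈ W, x ≠ 0 → 0 < B x x)
    (C : Set V) (hC : C.Countable) :
    ∃ P : Submodule ℝ V, Module.finrank ℝ P = 2 ∧
      (∀ x ∈ P, x ≠ 0 → 0 < B x x) ∧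
      ∀ t ∈ C, t ≠ 0 → ∃ x ∈ P, B x t ≠ 0 := by
  obtain ⟨W, hW, hWpos⟩ := hpos
  obtain ⟨a, b, ha, hab⟩ := exists_gram_of_finrank_eq_two B hsymm hW hWpos
  let C' := {t ∈ C | t ≠ 0}
  have : Countable C' := (hC.mono (Set.sep_subset _ _)).to_subtype
  have hker : ∀ t : C', LinearMap.ker (B.flip t) ≠ ⊤ := fun t htop =>
    t.2.2 <| hnd t fun y => by
      simpa [hsymm t y] using LinearMap.ext_iff.1 (LinearMap.ker_eq_top.1 htop) y
  obtain ⟨u, hu, hub, huC⟩ := exists_gram_forall_notMem_submodule B ha hab hker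
  obtain ⟨hrank, hP⟩ := finrank_span_pair_eq_two_and_pos_of_gram B hsymm hu hub
  exact ⟨_, hrank, hP, fun t ht ht0 =>
    ⟨u, Submodule.subset_span (by simp), huC ⟨t, ht, ht0⟩⟩⟩
end

section
/- Let n be a positive integer and let c, b_0 be integers with b_0²·c ≡ −1 (mod 4n). Then the number of residues b modulo 2n such that b²·c ≡ −1 (mod 4n) (a condition which is well defined on residues modulo 2n) equals half the number of elements x of the unit group (ℤ/4nℤ)* with x² = 1. -/
private lemma aux_mod (n k : ℕ) :
    ((k % (2*n) : ℕ) : ZMod (4*n))^2 = ((k : ℕ) : ZMod (4*n))^2 := by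
  have h0 : ((4*n : ℕ) : ZMod (4*n)) = 0 := ZMod.natCast_self _
  conv_rhs => rw [← Nat.div_add_mod k (2*n)]
  push_cast at h0 ⊢
  linear_combination (-(((n : ZMod (4*n)))*((k/(2*n) : ℕ) : ZMod (4*n))^2
    + ((k/(2*n):ℕ) : ZMod (4*n)) * ((k % (2*n) : ℕ) : ZMod (4*n)))) * h0

private lemma aux_add (n k : ℕ) :
    ((k + 2*n : ℕ) : ZMod (4*n))^2 = ((k : ℕ) : ZMod (4*n))^2 := by
  have h0 : ((4*n : ℕ) : ZMod (4*n)) = 0 := ZMod.natCast_self _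
  push_cast at h0 ⊢
  linear_combination ((k : ZMod (4*n)) + (n : ZMod (4*n))) * h0

/-- Let `n` be a positive integer and `c`, `b₀` integers with `b₀²·c ≡ −1 (mod 4n)`.
Then the number of residues `b` modulo `2n` with `b²·c ≡ −1 (mod 4n)` (a condition
well defined modulo `2n`) is half the number of square roots of `1` in the unit
group `(ℤ/4nℤ)ˣ`. -/
theorem stmt_13 (n : ℕ) (hn : 0 < n) (c b0 : ℤ)
    (h : ((b0 : ZMod (4 * n)) ^ 2 * (c : ZMod (4 * n)) = -1)) :
    2 * Nat.card {b : ZMod (2 * n) //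
        ((b.val : ZMod (4 * n)) ^ 2 * (c : ZMod (4 * n)) = -1)} =
      Nat.card {x : (ZMod (4 * n))ˣ // x ^ 2 = 1} := by
  haveI h4 : NeZero (4*n) := ⟨by positivity⟩
  haveI h2 : NeZero (2*n) := ⟨by positivity⟩
  set C : ZMod (4*n) := (c : ZMod (4*n)) with hC
  set B0 : ZMod (4*n) := (b0 : ZMod (4*n)) with hB0
  have hself : ∀ v : ZMod (4*n), ((v.val : ℕ) : ZMod (4*n)) = v := fun v => by
    rw [ZMod.natCast_val, ZMod.cast_id]
  have hself2 : ∀ v : ZMod (2*n), ((v.val : ℕ) : ZMod (2*n)) = v := fun v => by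
    rw [ZMod.natCast_val, ZMod.cast_id]
  have E1 : {x : (ZMod (4*n))ˣ // x ^ 2 = 1} ≃ {y : ZMod (4*n) // y^2 = 1} :=
  { toFun := fun x => ⟨(x.1 : ZMod (4*n)), by
      rw [← Units.val_pow_eq_pow_val, x.2, Units.val_one]⟩
    invFun := fun y => ⟨Units.mkOfMulEqOne y.1 y.1 (by rw [← sq]; exact y.2), by
      apply Units.ext
      rw [Units.val_pow_eq_pow_val]
      simpa [sq] using y.2⟩
    left_inv := fun x => Subtype.ext (Units.ext rfl)
    right_inv := fun y => rfl }
  have key_e : B0 * (-(B0 * C)) = 1 := by linear_combination -h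
  have key_e' : (-(B0 * C)) * B0 = 1 := by linear_combination -h
  have E2 : {y : ZMod (4*n) // y^2 = 1} ≃ {u : ZMod (4*n) // u^2 * C = -1} :=
  { toFun := fun y => ⟨y.1 * B0, by linear_combination (B0^2*C) * y.2 + h⟩
    invFun := fun u => ⟨u.1 * (-(B0 * C)), by linear_combination (B0^2*C) * u.2 - h⟩
    left_inv := fun y => Subtype.ext (by linear_combination (y.1 : ZMod (4*n)) * key_e)
    right_inv := fun u => Subtype.ext (by linear_combination (u.1 : ZMod (4*n)) * key_e) }
  have E3 : {u : ZMod (4*n) // u^2 * C = -1} ≃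
      (Bool × {b : ZMod (2*n) // ((b.val : ZMod (4*n)))^2 * C = -1}) :=
  { toFun := fun u => ⟨decide (2*n ≤ u.1.val),
      ⟨((u.1.val : ℕ) : ZMod (2*n)), by
        rw [ZMod.val_natCast, aux_mod n u.1.val, hself u.1]
        exact u.2⟩⟩
    invFun := fun p => ⟨((p.2.1.val + (if p.1 then 2*n else 0) : ℕ) : ZMod (4*n)), by
      obtain ⟨i, b⟩ := p
      cases i
      · simpa using b.2
      · simp only [if_pos]
        rw [aux_add n b.1.val]
        exact b.2⟩
    left_inv := fun u => by
      apply Subtype.ext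
      simp only [ZMod.val_natCast]
      have hlt : u.1.val < 4*n := ZMod.val_lt u.1
      by_cases hle : 2*n ≤ u.1.val
      · rw [if_pos (by simpa using hle)]
        have hm : u.1.val % (2*n) = u.1.val - 2*n := by
          rw [Nat.mod_eq_sub_mod hle, Nat.mod_eq_of_lt (by omega)]
        rw [hm, Nat.sub_add_cancel hle]
        exact hself u.1
      · rw [if_neg (by simpa using hle), Nat.mod_eq_of_lt (by omega), Nat.add_zero]
        exact hself u.1
    right_inv := fun p => by
      obtain ⟨i, b⟩ := p
      have hbv : b.1.val < 2*n := ZMod.val_lt b.1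
      have hval : ((b.1.val + (if i then 2*n else 0) : ℕ) : ZMod (4*n)).val
          = b.1.val + (if i then 2*n else 0) :=
        ZMod.val_natCast_of_lt (by cases i <;> simp <;> omega)
      refine Prod.ext ?_ (Subtype.ext ?_)
      · simp only [hval]
        cases i <;> simp <;> omega
      · simp only [hval]
        push_cast
        have hz : ((2*n : ℕ) : ZMod (2*n)) = 0 := ZMod.natCast_self _
        push_cast at hz
        cases i <;> simp [hz, hself2 b.1] }
  rw [Nat.card_congr (E1.trans (E2.trans E3)), Nat.card_prod]
  simp
end
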